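/- arXiv:math/0509263 — 2 statements merged into one kernel-verified Lean document; each statement's English description precedes it below -/
import Mathlib

section
/- Let f'(0) > 0 and let ρ: ℝ → ℝ be convex, even, with ρ(0) = 0 and ρ(λ) ≥ 0 for all λ. Set μ(λ) = λ²/2 + f'(0) + ρ(λ). Then for every λ > λ₀ := √(2 f'(0)), we have μ(λ)/λ > μ(λ₀)/λ₀; in particular the infimum of μ(λ)/λ over (0,∞) is attained in the interval (0, λ₀]. -/
/-!
Write `μ λ / λ = (λ / 2 + f'(0) / λ) + ρ λ / λ` for `λ ≠ 0`. The first summand is strictly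
increasing on `[λ₀, ∞)`, and, `ρ` being convex with `ρ 0 = 0`, the second is the slope of `ρ`
from the origin, hence nondecreasing; this gives the strict inequality beyond `λ₀`. The same
slope bound from below, `ρ λ / λ ≥ ρ (-1) / (-1)`, makes `μ λ / λ → ∞` as `λ → 0⁺`, so the
continuous function `μ λ / λ` attains its minimum on `(0, λ₀]`, and that minimum is global on
`(0, ∞)` by the first part.
-/

open Set Filter Topology

theorem ConvexOn.div_le_div_of_map_zero {s : Set ℝ} {ρ : ℝ → ℝ} (hρ : ConvexOn ℝ s ρ)
    (h0 : ρ 0 = 0) (hs : (0 : ℝ) ∈ s) {x y : ℝ} (hx : x ∈ s) (hy : y ∈ s) (hx0 : x ≠ 0)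
    (hy0 : y ≠ 0) (hxy : x ≤ y) : ρ x / x ≤ ρ y / y := by
  simpa [h0] using hρ.secant_mono hs hx hy hx0 hy0 hxy

theorem strictMonoOn_half_add_div {c : ℝ} (hc : 0 < c) :
    StrictMonoOn (fun t : ℝ => t / 2 + c / t) (Ici √(2 * c)) := by
  intro a ha b _ hab
  have ha0 : 0 < a := (Real.sqrt_pos.mpr (by positivity)).trans_le ha
  have hb0 : 0 < b := ha0.trans hab
  have hab2 : 2 * c < a * b :=
    calc 2 * c = √(2 * c) * √(2 * c) := (Real.mul_self_sqrt (by positivity)).symm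
      _ ≤ a * a := mul_self_le_mul_self (Real.sqrt_nonneg _) ha
      _ < a * b := mul_lt_mul_of_pos_left hab ha0
  have hdiff : b / 2 + c / b - (a / 2 + c / a) = (b - a) * (a * b - 2 * c) / (2 * a * b) := by
    field_simp
    ring
  have hpos : 0 < (b - a) * (a * b - 2 * c) / (2 * a * b) :=
    div_pos (mul_pos (sub_pos.mpr hab) (sub_pos.mpr hab2)) (by positivity)
  show a / 2 + c / a < b / 2 + c / b
  linarith

theorem exists_isMinOn_Ioc_of_tendsto_atTop {g : ℝ → ℝ} {a b : ℝ} (hab : a < b)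
    (hg : ContinuousOn g (Ioc a b)) (hlim : Tendsto g (𝓝[>] a) atTop) :
    ∃ x ∈ Ioc a b, IsMinOn g (Ioc a b) x := by
  obtain ⟨u, hu, hgu⟩ := mem_nhdsGT_iff_exists_Ioo_subset.mp (hlim.eventually_ge_atTop (g b))
  set δ := min ((a + u) / 2) b
  have haδ : a < δ := lt_min (by linarith [mem_Ioi.mp hu]) hab
  have hδu : δ < u := (min_le_left _ _).trans_lt (by linarith [mem_Ioi.mp hu])
  have hδb : δ ≤ b := min_le_right _ _
  have hIcc : Icc δ b ⊆ Ioc a b := fun y hy => ⟨haδ.trans_le hy.1, hy.2⟩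
  obtain ⟨x, hx, hmin⟩ :=
    isCompact_Icc.exists_isMinOn (nonempty_Icc.mpr hδb) (hg.mono hIcc)
  refine ⟨x, hIcc hx, fun y hy => ?_⟩
  rcases le_or_gt δ y with hδy | hyδ
  · exact hmin ⟨hδy, hy.2⟩
  · have hgy : g b ≤ g y := hgu ⟨hy.1, hyδ.trans hδu⟩
    exact (hmin ⟨hδb, le_rfl⟩).trans hgy

theorem tendsto_div_nhdsGT_zero_atTop_of_convexOn {ρ : ℝ → ℝ} (hρ : ConvexOn ℝ univ ρ)
    (h0 : ρ 0 = 0) {c : ℝ} (hc : 0 < c) :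
    Tendsto (fun x : ℝ => (x ^ 2 / 2 + c + ρ x) / x) (𝓝[>] 0) atTop := by
  have hbound : ∀ x : ℝ, 0 < x → ρ (-1) / (-1) + c * x⁻¹ ≤ (x ^ 2 / 2 + c + ρ x) / x := by
    intro x hx
    have hslope := hρ.div_le_div_of_map_zero h0 (mem_univ 0) (mem_univ (-1)) (mem_univ x)
      (by norm_num) hx.ne' (by linarith)
    have hsplit : (x ^ 2 / 2 + c + ρ x) / x = x / 2 + c * x⁻¹ + ρ x / x := by
      field_simp
    linarith
  refine tendsto_atTop_mono' _ (eventually_nhdsWithin_of_forall hbound) ?_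
  exact tendsto_atTop_add_const_left _ _ (tendsto_inv_nhdsGT_zero.const_mul_atTop hc)

theorem unique_minimizer_interval_general (f'0 : ℝ) (hf : 0 < f'0) (ρ : ℝ → ℝ)
    (hconv : ConvexOn ℝ Set.univ ρ)
    (h0 : ρ 0 = 0)
    (μ : ℝ → ℝ)
    (hμ : ∀ lam : ℝ, μ lam = lam ^ 2 / 2 + f'0 + ρ lam) :
    (∀ lam : ℝ, Real.sqrt (2 * f'0) < lam →
        μ (Real.sqrt (2 * f'0)) / Real.sqrt (2 * f'0) < μ lam / lam) ∧
    ∃ lamStar ∈ Set.Ioc (0 : ℝ) (Real.sqrt (2 * f'0)),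
      ∀ lam > (0 : ℝ), μ lamStar / lamStar ≤ μ lam / lam := by
  set l₀ := √(2 * f'0)
  have hl₀ : 0 < l₀ := Real.sqrt_pos.mpr (by positivity)
  have hsplit : ∀ lam ≠ 0, μ lam / lam = (lam / 2 + f'0 / lam) + ρ lam / lam := by
    intro lam hlam
    rw [hμ]
    field_simp
  have hstrict : ∀ lam, l₀ < lam → μ l₀ / l₀ < μ lam / lam := by
    intro lam hlam
    rw [hsplit l₀ hl₀.ne', hsplit lam (hl₀.trans hlam).ne']
    have hmono := strictMonoOn_half_add_div hf (mem_Ici.mpr le_rfl) hlam.le hlam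
    have hslope := hconv.div_le_div_of_map_zero h0 (mem_univ 0) (mem_univ l₀) (mem_univ lam)
      hl₀.ne' (hl₀.trans hlam).ne' hlam.le
    exact add_lt_add_of_lt_of_le hmono hslope
  have hcont : ContinuousOn (fun lam => μ lam / lam) (Ioc 0 l₀) := by
    have hρ : Continuous ρ := continuousOn_univ.mp (hconv.continuousOn isOpen_univ)
    simp only [hμ]
    exact ContinuousOn.div (by fun_prop) continuousOn_id fun x hx => hx.1.ne'
  have hlim : Tendsto (fun lam => μ lam / lam) (𝓝[>] 0) atTop := by
    simpa only [hμ] using tendsto_div_nhdsGT_zero_atTop_of_convexOn hconv h0 hf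
  obtain ⟨lamStar, hmem, hmin⟩ := exists_isMinOn_Ioc_of_tendsto_atTop hl₀ hcont hlim
  refine ⟨hstrict, lamStar, hmem, fun lam hlam => ?_⟩
  rcases le_or_gt lam l₀ with hle | hgt
  · exact hmin ⟨hlam, hle⟩
  · exact (hmin ⟨hl₀, le_rfl⟩).trans (hstrict lam hgt).le

theorem unique_minimizer_interval (f'0 : ℝ) (hf : 0 < f'0) (ρ : ℝ → ℝ)
    (hconv : ConvexOn ℝ Set.univ ρ)
    (heven : ∀ lam : ℝ, ρ (-lam) = ρ lam)
    (h0 : ρ 0 = 0)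
    (hnonneg : ∀ lam : ℝ, 0 ≤ ρ lam)
    (μ : ℝ → ℝ)
    (hμ : ∀ lam : ℝ, μ lam = lam ^ 2 / 2 + f'0 + ρ lam) :
    (∀ lam : ℝ, Real.sqrt (2 * f'0) < lam →
        μ (Real.sqrt (2 * f'0)) / Real.sqrt (2 * f'0) < μ lam / lam) ∧
    ∃ lamStar ∈ Set.Ioc (0 : ℝ) (Real.sqrt (2 * f'0)),
      ∀ lam > (0 : ℝ), μ lamStar / lamStar ≤ μ lam / lam :=
  unique_minimizer_interval_general f'0 hf ρ hconv h0 μ hμ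
end

section
/- Let q_δ^y(c, r, t) for y in a compact set D be nonnegative and satisfy, for all 0 ≤ r < t: log q^y(0,t) ≥ log q⁻(0,r) + log q^y(r,t) and log q^y(0,t) ≤ log q⁺(0,r) + log q^y(r,t), where q⁻ = inf_y q^y and q⁺ = sup_y q^y. Suppose lim_{t→∞} (1/t) log q⁻(0,t) = lim_{t→∞} (1/t) log q⁺(0,t) = −S with S finite, and fix κ ∈ (0,1). Then lim_{t→∞} (1/(κt)) log q^y((1−κ)t, t) = −S for each y. -/
open Filter

theorem terminal_window_sandwich
    {Y : Type*} (q : Y → ℝ → ℝ → ℝ) (qm qp : ℝ → ℝ → ℝ) (S κ : ℝ)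
    (hκ : κ ∈ Set.Ioo (0:ℝ) 1)
    (hpos : ∀ y : Y, ∀ r t : ℝ, 0 ≤ r → r < t → 0 < q y r t)
    (hmpos : ∀ r t : ℝ, 0 ≤ r → r < t → 0 < qm r t)
    (hsandwich : ∀ y : Y, ∀ r t : ℝ, 0 ≤ r → r < t → qm r t ≤ q y r t ∧ q y r t ≤ qp r t)
    (hsub : ∀ y : Y, ∀ r t : ℝ, 0 < r → r < t →
      Real.log (qm 0 r) + Real.log (q y r t) ≤ Real.log (q y 0 t) ∧
      Real.log (q y 0 t) ≤ Real.log (qp 0 r) + Real.log (q y r t))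
    (hlimm : Tendsto (fun t => (1 / t) * Real.log (qm 0 t)) atTop (nhds (-S)))
    (hlimp : Tendsto (fun t => (1 / t) * Real.log (qp 0 t)) atTop (nhds (-S))) :
    ∀ y : Y, Tendsto (fun t => (1 / (κ * t)) * Real.log (q y ((1 - κ) * t) t))
      atTop (nhds (-S)) := by
  obtain ⟨hκ0, hκ1⟩ := hκ
  have h1κ : (0:ℝ) < 1 - κ := by linarith
  intro y
  -- scaling map t ↦ (1-κ)*t tends to atTop
  have hc : Tendsto (fun t : ℝ => (1 - κ) * t) atTop atTop :=
    Tendsto.const_mul_atTop h1κ tendsto_id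
  -- limit of (1/t) * log (qp 0 ((1-κ)t)) is (1-κ)*(-S)
  have h1 : Tendsto (fun t => (1 / t) * Real.log (qp 0 ((1 - κ) * t))) atTop
      (nhds ((1 - κ) * (-S))) := by
    have := (hlimp.comp hc).const_mul (1 - κ)
    refine this.congr' ?_
    filter_upwards [eventually_gt_atTop (0:ℝ)] with t ht
    simp only [Function.comp]
    field_simp
  have h2 : Tendsto (fun t => (1 / t) * Real.log (qm 0 ((1 - κ) * t))) atTop
      (nhds ((1 - κ) * (-S))) := by
    have := (hlimm.comp hc).const_mul (1 - κ)
    refine this.congr' ?_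
    filter_upwards [eventually_gt_atTop (0:ℝ)] with t ht
    simp only [Function.comp]
    field_simp
  -- lower bound function
  have hL : Tendsto (fun t => (1 / κ) * ((1 / t) * Real.log (qm 0 t)
      - (1 / t) * Real.log (qp 0 ((1 - κ) * t)))) atTop (nhds (-S)) := by
    have h := (hlimm.sub h1).const_mul (1 / κ)
    have heq : (1 / κ) * (-S - (1 - κ) * (-S)) = -S := by
      field_simp; ring
    rwa [heq] at h
  have hU : Tendsto (fun t => (1 / κ) * ((1 / t) * Real.log (qp 0 t)
      - (1 / t) * Real.log (qm 0 ((1 - κ) * t)))) atTop (nhds (-S)) := by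
    have h := (hlimp.sub h2).const_mul (1 / κ)
    have heq : (1 / κ) * (-S - (1 - κ) * (-S)) = -S := by
      field_simp; ring
    rwa [heq] at h
  refine tendsto_of_tendsto_of_tendsto_of_le_of_le' hL hU ?_ ?_
  · filter_upwards [eventually_gt_atTop (0:ℝ)] with t ht
    set r := (1 - κ) * t with hr
    have hr0 : 0 < r := mul_pos h1κ ht
    have hrt : r < t := by nlinarith
    have hs := hsub y r t hr0 hrt
    have hqt := hpos y 0 t (le_refl 0) ht
    have hqmt := hmpos 0 t (le_refl 0) ht
    have hmono : Real.log (qm 0 t) ≤ Real.log (q y 0 t) :=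
      Real.log_le_log hqmt (hsandwich y 0 t (le_refl 0) ht).1
    have key : Real.log (qm 0 t) - Real.log (qp 0 r) ≤ Real.log (q y r t) := by
      linarith [hs.2]
    have hκt : 0 < κ * t := mul_pos hκ0 ht
    have := mul_le_mul_of_nonneg_left key (le_of_lt (one_div_pos.mpr hκt))
    calc (1 / κ) * ((1 / t) * Real.log (qm 0 t) - (1 / t) * Real.log (qp 0 r))
        = (1 / (κ * t)) * (Real.log (qm 0 t) - Real.log (qp 0 r)) := by
          field_simp
      _ ≤ (1 / (κ * t)) * Real.log (q y r t) := this
  · filter_upwards [eventually_gt_atTop (0:ℝ)] with t ht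
    set r := (1 - κ) * t with hr
    have hr0 : 0 < r := mul_pos h1κ ht
    have hrt : r < t := by nlinarith
    have hs := hsub y r t hr0 hrt
    have hqt := hpos y 0 t (le_refl 0) ht
    have hmono : Real.log (q y 0 t) ≤ Real.log (qp 0 t) :=
      Real.log_le_log hqt (hsandwich y 0 t (le_refl 0) ht).2
    have key : Real.log (q y r t) ≤ Real.log (qp 0 t) - Real.log (qm 0 r) := by
      linarith [hs.1]
    have hκt : 0 < κ * t := mul_pos hκ0 ht
    have := mul_le_mul_of_nonneg_left key (le_of_lt (one_div_pos.mpr hκt))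
    calc (1 / (κ * t)) * Real.log (q y r t)
        ≤ (1 / (κ * t)) * (Real.log (qp 0 t) - Real.log (qm 0 r)) := this
      _ = (1 / κ) * ((1 / t) * Real.log (qp 0 t) - (1 / t) * Real.log (qm 0 r)) := by
          field_simp
end
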